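/- Let p be an odd prime, χ the quadratic (Legendre) character of F_p extended by χ(0)=0, and S a nonempty subset of F_p. Assume the Weil character-sum bound: |∑_{b ∈ F_p} χ(∏_{x ∈ S}(x+b))| ≤ (|S| - 1) * √p. If b is chosen uniformly at random from F_p and x + b ≠ 0 for all x ∈ S, then the probability (over b satisfying the nonvanishing condition, or equivalently counting b ∈ F_p for which additionally no x+b vanishes) that |{x ∈ S : χ(x+b) = -1}| is odd is at least 1/2 - (|S|-1)/(2√p) - |S|/p. -/

import Mathlib

/-!
For `b` with `x + b ≠ 0` for all `x ∈ S`, multiplicativity of `χ` gives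
`χ (∏ x ∈ S, (x + b)) = (-1) ^ #{x ∈ S | χ (x + b) = -1}`, while the other `b`, at most `|S|` of
them, contribute `0`. Hence the Weil sum equals `#G - 2 #A`, where `G` is the set of admissible `b`
and `A ⊆ G` those with an odd count, and `#G ≥ p - |S|` together with the Weil bound gives
`2 #A ≥ p - |S| - (|S| - 1) √p`.
-/

open Classical in
noncomputable def legChar (p : ℕ) (a : ZMod p) : ℤ :=
  if a = 0 then 0 else if IsSquare a then 1 else -1

open Finset

theorem Finset.prod_eq_pow_card_filter_of_forall_eq_one_or_eq {ι M : Type*} [CommMonoid M]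
    (s : Finset ι) (f : ι → M) (u : M) [DecidablePred fun i => f i = u]
    (hf : ∀ i ∈ s, f i = 1 ∨ f i = u) :
    ∏ i ∈ s, f i = u ^ #{i ∈ s | f i = u} := by
  rw [← prod_filter_mul_prod_filter_not s fun i => f i = u,
    prod_eq_pow_card fun i hi => (mem_filter.1 hi).2,
    prod_eq_one fun i hi => (hf i (mem_filter.1 hi).1).resolve_right (mem_filter.1 hi).2, mul_one]

theorem Finset.sum_neg_one_pow_eq_card_sub_two_mul_card_odd {α : Type*} (s : Finset α) (N : α → ℕ)
    [DecidablePred fun a => Odd (N a)] :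
    ∑ a ∈ s, (-1 : ℤ) ^ N a = #s - 2 * #{a ∈ s | Odd (N a)} := by
  have hsplit := card_filter_add_card_filter_not (s := s) (p := fun a => Odd (N a))
  rw [← sum_filter_add_sum_filter_not s fun a => Odd (N a),
    sum_congr rfl fun a ha => (mem_filter.1 ha).2.neg_one_pow,
    sum_congr rfl fun a ha => (Nat.not_odd_iff_even.1 (mem_filter.1 ha).2).neg_one_pow]
  simp only [sum_const, nsmul_eq_mul, mul_neg, mul_one]
  omega

theorem Finset.card_le_card_filter_forall_add_ne_zero_add {G : Type*} [AddGroup G] [Fintype G]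
    [DecidableEq G] (S : Finset G) :
    Fintype.card G ≤ #{b | ∀ x ∈ S, x + b ≠ 0} + #S := by
  have hcover : (univ : Finset G) ⊆ ({b | ∀ x ∈ S, x + b ≠ 0} : Finset G) ∪ S.image (-·) := by
    intro b _
    by_cases hb : ∀ x ∈ S, x + b ≠ 0
    · exact mem_union_left _ (mem_filter.2 ⟨mem_univ b, hb⟩)
    · push Not at hb
      obtain ⟨x, hx, hxb⟩ := hb
      exact mem_union_right _ (mem_image.2 ⟨x, hx, neg_eq_of_add_eq_zero_right hxb⟩)
  calc Fintype.card G = #(univ : Finset G) := card_univ.symm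
    _ ≤ _ := card_le_card hcover
    _ ≤ _ := card_union_le _ _
    _ ≤ _ := Nat.add_le_add_left card_image_le _

section legChar

variable {p : ℕ} [Fact p.Prime]

theorem legChar_eq_quadraticChar (a : ZMod p) : legChar p a = quadraticChar (ZMod p) a := by
  rw [quadraticChar_apply, quadraticCharFun, legChar]
  split_ifs <;> rfl

theorem legChar_prod {ι : Type*} (s : Finset ι) (f : ι → ZMod p) :
    legChar p (∏ i ∈ s, f i) = ∏ i ∈ s, legChar p (f i) := by
  simp only [legChar_eq_quadraticChar, map_prod]

theorem legChar_eq_one_or_eq_neg_one {a : ZMod p} (ha : a ≠ 0) :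
    legChar p a = 1 ∨ legChar p a = -1 := by
  unfold legChar
  split_ifs <;> simp_all

theorem legChar_prod_of_ne_zero {ι : Type*} (s : Finset ι) (f : ι → ZMod p)
    (hf : ∀ i ∈ s, f i ≠ 0) :
    legChar p (∏ i ∈ s, f i) = (-1) ^ #{i ∈ s | legChar p (f i) = -1} := by
  rw [legChar_prod]
  exact prod_eq_pow_card_filter_of_forall_eq_one_or_eq s _ _
    fun i hi => legChar_eq_one_or_eq_neg_one (hf i hi)

theorem sum_legChar_prod_add_eq (S : Finset (ZMod p)) :
    ∑ b : ZMod p, legChar p (∏ x ∈ S, (x + b)) =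
      #{b | ∀ x ∈ S, x + b ≠ 0} -
        2 * #{b | (∀ x ∈ S, x + b ≠ 0) ∧ Odd #{x ∈ S | legChar p (x + b) = -1}} := by
  have hvanish : ∀ b ∈ (univ : Finset (ZMod p)), ¬ (∀ x ∈ S, x + b ≠ 0) →
      legChar p (∏ x ∈ S, (x + b)) = 0 := by
    intro b _ hb
    push Not at hb
    obtain ⟨x, hx, hxb⟩ := hb
    rw [prod_eq_zero hx hxb]
    simp [legChar]
  rw [← sum_filter_of_ne fun b hb h => not_not.1 fun hb' => h (hvanish b hb hb'),
    sum_congr rfl fun b hb => legChar_prod_of_ne_zero S _ (mem_filter.1 hb).2,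
    sum_neg_one_pow_eq_card_sub_two_mul_card_odd, filter_filter]

end legChar

open Classical in
theorem parity_probability_lower_bound_general (p : ℕ)
    [Fact p.Prime] (S : Finset (ZMod p))
    (hWeil : |(∑ b : ZMod p, legChar p (∏ x ∈ S, (x + b)) : ℝ)| ≤
      ((S.card : ℝ) - 1) * Real.sqrt p) :
    ((Finset.univ.filter fun b : ZMod p =>
        (∀ x ∈ S, x + b ≠ 0) ∧
          Odd (S.filter fun x => legChar p (x + b) = -1).card).card : ℝ) / p ≥
      1 / 2 - ((S.card : ℝ) - 1) / (2 * Real.sqrt p) - (S.card : ℝ) / p := by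
  set A := Finset.univ.filter fun b : ZMod p =>
    (∀ x ∈ S, x + b ≠ 0) ∧ Odd (S.filter fun x => legChar p (x + b) = -1).card
  set G := Finset.univ.filter fun b : ZMod p => ∀ x ∈ S, x + b ≠ 0
  have hsum : (G.card : ℝ) - 2 * A.card ≤ ((S.card : ℝ) - 1) * Real.sqrt p := by
    refine le_trans (le_of_eq ?_) ((le_abs_self _).trans hWeil)
    exact_mod_cast (sum_legChar_prod_add_eq S).symm
  have hG : (p : ℝ) ≤ G.card + S.card := by
    exact_mod_cast ZMod.card p ▸ card_le_card_filter_forall_add_ne_zero_add S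
  have hp : (0 : ℝ) < p := by exact_mod_cast (Fact.out : p.Prime).pos
  have hsqrt : Real.sqrt p * Real.sqrt p = p := Real.mul_self_sqrt hp.le
  rw [ge_iff_le, le_div_iff₀ hp]
  have hrhs : (1 / 2 - ((S.card : ℝ) - 1) / (2 * Real.sqrt p) - S.card / p) * p =
      p / 2 - ((S.card : ℝ) - 1) * Real.sqrt p / 2 - S.card := by
    field_simp
    linear_combination ((S.card : ℝ) - 1) * hsqrt
  rw [hrhs]
  linarith [(S.card.cast_nonneg : (0 : ℝ) ≤ S.card)]

open Classical in
theorem parity_probability_lower_bound (p : ℕ) (hp : p.Prime) (hodd : p ≠ 2)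
    [Fact p.Prime] (S : Finset (ZMod p)) (hS : S.Nonempty)
    (hWeil : |(∑ b : ZMod p, legChar p (∏ x ∈ S, (x + b)) : ℝ)| ≤
      ((S.card : ℝ) - 1) * Real.sqrt p) :
    ((Finset.univ.filter fun b : ZMod p =>
        (∀ x ∈ S, x + b ≠ 0) ∧
          Odd (S.filter fun x => legChar p (x + b) = -1).card).card : ℝ) / p ≥
      1 / 2 - ((S.card : ℝ) - 1) / (2 * Real.sqrt p) - (S.card : ℝ) / p :=
  parity_probability_lower_bound_general p S hWeil
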